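/- If n is an odd positive integer not divisible by 9, then the number of positive divisors of n satisfies d(n) ≤ (8/105^{1/3}) · n^{1/3}; in particular d(n) < 1.696 · n^{1/3}. -/
import Mathlib

private lemma aux11 : ∀ k : ℕ, (k+1)^3 ≤ 11^k
  | 0 => by norm_num
  | (k+1) => by
      have ih := aux11 k
      calc (k+2)^3 ≤ (2*(k+1))^3 := Nat.pow_le_pow_left (by omega) 3
        _ = 8*(k+1)^3 := by ring
        _ ≤ 8*11^k := Nat.mul_le_mul_left 8 ih
        _ ≤ 11*11^k := Nat.mul_le_mul_right _ (by norm_num)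
        _ = 11^(k+1) := by ring

private lemma aux5 : ∀ k : ℕ, 5*(k+1)^3 ≤ 8*5^k
  | 0 => by norm_num
  | 1 => by norm_num
  | (k+2) => by
      have ih : 5*(k+2)^3 ≤ 8*5^(k+1) := aux5 (k+1)
      have h : (k+3)^3 ≤ 5*(k+2)^3 := by nlinarith [k.zero_le, sq_nonneg k]
      calc 5*(k+3)^3 ≤ 5*(5*(k+2)^3) := Nat.mul_le_mul_left 5 h
        _ ≤ 5*(8*5^(k+1)) := Nat.mul_le_mul_left 5 ih
        _ = 8*5^(k+2) := by ring

private lemma aux7 : ∀ k : ℕ, 7*(k+1)^3 ≤ 8*7^k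
  | 0 => by norm_num
  | 1 => by norm_num
  | (k+2) => by
      have ih : 7*(k+2)^3 ≤ 8*7^(k+1) := aux7 (k+1)
      have h : (k+3)^3 ≤ 7*(k+2)^3 := by nlinarith [k.zero_le, sq_nonneg k]
      calc 7*(k+3)^3 ≤ 7*(7*(k+2)^3) := Nat.mul_le_mul_left 7 h
        _ ≤ 7*(8*7^(k+1)) := Nat.mul_le_mul_left 7 ih
        _ = 8*7^(k+2) := by ring

private noncomputable def cfun (p : ℕ) : ℝ :=
  if p = 3 then 8/3 else if p = 5 then 8/5 else if p = 7 then 8/7 else 1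

private lemma one_le_cfun (p : ℕ) : 1 ≤ cfun p := by
  unfold cfun; split_ifs <;> norm_num

private lemma pointwise (p k : ℕ) (hp : p.Prime) (hp2 : p ≠ 2) (h3 : p = 3 → k ≤ 1) :
    ((k : ℝ) + 1)^3 ≤ cfun p * (p : ℝ)^k := by
  by_cases e3 : p = 3
  · subst e3
    have hk := h3 rfl
    interval_cases k <;> norm_num [cfun]
  · by_cases e5 : p = 5
    · subst e5
      have h' : (5:ℝ)*((k:ℝ)+1)^3 ≤ 8*(5:ℝ)^k := by exact_mod_cast aux5 k
      simp only [cfun]; norm_num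
      linarith
    · by_cases e7 : p = 7
      · subst e7
        have h' : (7:ℝ)*((k:ℝ)+1)^3 ≤ 8*(7:ℝ)^k := by exact_mod_cast aux7 k
        simp only [cfun]; norm_num
        linarith
      · have hp11 : 11 ≤ p := by
          by_contra hlt
          push_neg at hlt
          interval_cases p <;> simp_all (config := {decide := true})
        have h1 : ((k:ℝ)+1)^3 ≤ (11:ℝ)^k := by exact_mod_cast aux11 k
        have h2 : (11:ℝ)^k ≤ (p:ℝ)^k := by
          apply pow_le_pow_left₀ (by norm_num)
          exact_mod_cast hp11
        have hc : cfun p = 1 := by simp [cfun, e3, e5, e7]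
        rw [hc, one_mul]
        linarith

private lemma cprod (S : Finset ℕ) : ∏ p ∈ S, cfun p ≤ 512/105 := by
  have hposS : (0:ℝ) ≤ ∏ p ∈ S, cfun p :=
    Finset.prod_nonneg fun p _ => le_trans zero_le_one (one_le_cfun p)
  have hA : ∏ p ∈ S, cfun p ≤ ∏ p ∈ S ∪ ({3,5,7} : Finset ℕ), cfun p := by
    rw [← Finset.union_sdiff_self_eq_union, Finset.prod_union Finset.disjoint_sdiff]
    refine le_mul_of_one_le_right hposS ?_
    calc (1:ℝ) = ∏ _p ∈ (({3,5,7} : Finset ℕ) \ S), 1 := by rw [Finset.prod_const_one]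
      _ ≤ ∏ p ∈ (({3,5,7} : Finset ℕ) \ S), cfun p :=
          Finset.prod_le_prod (fun _ _ => zero_le_one) (fun p _ => one_le_cfun p)
  have hB : ∏ p ∈ S ∪ ({3,5,7} : Finset ℕ), cfun p = ∏ p ∈ ({3,5,7} : Finset ℕ), cfun p := by
    refine (Finset.prod_subset Finset.subset_union_right ?_).symm
    intro p _ hpT
    simp only [Finset.mem_insert, Finset.mem_singleton, not_or] at hpT
    simp [cfun, hpT.1, hpT.2.1, hpT.2.2]
  have hC : ∏ p ∈ ({3,5,7} : Finset ℕ), cfun p = 512/105 := by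
    norm_num [Finset.prod_insert, cfun]
  linarith [hA, hB.le, hB.ge]

/-- If `n` is an odd positive integer not divisible by `9` then
`d(n) ≤ (8/105^(1/3)) n^(1/3)`; in particular `d(n) < 1.696 n^(1/3)`. -/
theorem stmt11 (n : ℕ) (hn : 0 < n) (hodd : Odd n) (h9 : ¬ (9 ∣ n)) :
    (n.divisors.card : ℝ) ≤ 8 / (105 : ℝ) ^ ((1 : ℝ) / 3) * (n : ℝ) ^ ((1 : ℝ) / 3) ∧
    (n.divisors.card : ℝ) < 1.696 * (n : ℝ) ^ ((1 : ℝ) / 3) := by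
  have hn0 : n ≠ 0 := hn.ne'
  set f := n.factorization with hf
  set S := n.factorization.support with hS
  have hd : (n.divisors.card : ℝ) = ∏ p ∈ S, ((f p : ℝ) + 1) := by
    rw [Nat.card_divisors hn0]
    push_cast [Finsupp.prod]
    rfl
  have hnn : (n : ℝ) = ∏ p ∈ S, (p : ℝ) ^ (f p) := by
    conv_lhs => rw [← Nat.factorization_prod_pow_eq_self hn0]
    push_cast [Finsupp.prod]
    rfl
  have hkey : 105 * (n.divisors.card : ℝ)^3 ≤ 512 * (n : ℝ) := by
    have hpt : ∀ p ∈ S, ((f p : ℝ) + 1)^3 ≤ cfun p * (p : ℝ)^(f p) := by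
      intro p hpS
      have hpS' : p ∈ n.primeFactors := by rwa [← Nat.support_factorization]
      have hp : p.Prime := Nat.prime_of_mem_primeFactors hpS'
      have hpd : p ∣ n := Nat.dvd_of_mem_primeFactors hpS'
      have hp2 : p ≠ 2 := by
        rintro rfl
        obtain ⟨m, hm⟩ := hodd
        omega
      have h3 : p = 3 → f p ≤ 1 := by
        rintro rfl
        by_contra hgt
        push_neg at hgt
        have h32 : 3^2 ∣ n := (Nat.Prime.pow_dvd_iff_le_factorization hp hn0).mpr hgt
        exact h9 (by norm_num at h32 ⊢; exact h32)
      exact pointwise p (f p) hp hp2 h3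
    have h1 : ∏ p ∈ S, ((f p : ℝ) + 1)^3 ≤ ∏ p ∈ S, (cfun p * (p : ℝ)^(f p)) :=
      Finset.prod_le_prod (fun p _ => by positivity) hpt
    rw [Finset.prod_mul_distrib] at h1
    have h2 : (∏ p ∈ S, cfun p) * ∏ p ∈ S, (p : ℝ)^(f p) ≤
        512/105 * ∏ p ∈ S, (p : ℝ)^(f p) := by
      apply mul_le_mul_of_nonneg_right (cprod S)
      exact Finset.prod_nonneg fun p _ => by positivity
    have h3 : (n.divisors.card : ℝ)^3 = ∏ p ∈ S, ((f p : ℝ) + 1)^3 := by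
      rw [hd, ← Finset.prod_pow]
    rw [h3, ← hnn] at *
    nlinarith [h1, h2]
  have h105 : (0:ℝ) < (105:ℝ) ^ ((1:ℝ)/3) := Real.rpow_pos_of_pos (by norm_num) _
  have hc105 : ((105:ℝ) ^ ((1:ℝ)/3))^(3:ℕ) = 105 := by
    rw [← Real.rpow_natCast ((105:ℝ) ^ ((1:ℝ)/3)) 3, ← Real.rpow_mul (by norm_num)]
    norm_num
  have hcn : (((n:ℝ)) ^ ((1:ℝ)/3))^(3:ℕ) = (n:ℝ) := by
    rw [← Real.rpow_natCast ((n:ℝ) ^ ((1:ℝ)/3)) 3, ← Real.rpow_mul (by positivity)]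
    norm_num
  have hY : (0:ℝ) < (n:ℝ) ^ ((1:ℝ)/3) :=
    Real.rpow_pos_of_pos (by exact_mod_cast hn) _
  have part1 : (n.divisors.card : ℝ) ≤ 8 / (105:ℝ) ^ ((1:ℝ)/3) * (n:ℝ) ^ ((1:ℝ)/3) := by
    rw [div_mul_eq_mul_div, le_div_iff₀ h105]
    refine (pow_le_pow_iff_left₀ (by positivity) (by positivity) (three_ne_zero)).mp ?_
    rw [mul_pow, mul_pow, hc105, hcn]
    nlinarith [hkey]
  have hlt : 8 / (105:ℝ) ^ ((1:ℝ)/3) < 1.696 := by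
    rw [div_lt_iff₀ h105]
    by_contra hle
    push_neg at hle
    have h8 : (0:ℝ) ≤ 1.696 * (105:ℝ) ^ ((1:ℝ)/3) := by positivity
    have hcube := pow_le_pow_left₀ h8 hle 3
    rw [mul_pow, hc105] at hcube
    norm_num at hcube
  exact ⟨part1, lt_of_le_of_lt part1 (mul_lt_mul_of_pos_right hlt hY)⟩
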